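/- arXiv:1803.10802 — 6 statements merged into one kernel-verified Lean document; each statement's English description precedes it below -/
import Mathlib

section
/- For a prime p and t ∈ p·ℤ_p, the function f : ℤ_p → ℚ_p defined on nonnegative integers n by f(n) = ∑_{k=1}^{n} C(n,k) t^{k-1} / C(2k,k) extends to a continuous function on ℤ_p; equivalently, the Mahler coefficients t^{k-1}/C(2k,k) tend to 0 in ℚ_p as k → ∞. -/
/-!
Since `p ∣ t`, `‖t‖ < 1`, while `p ^ v_p(C(2k,k)) ≤ 2k` (Kummer), so
`‖t ^ (k-1) / C(2k,k)‖ ≤ 2k · ‖t‖ ^ (k-1) → 0`. Mahler's theorem then turns this null sequence of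
coefficients into the continuous function `∑ₖ C(x,k) · t ^ (k-1) / C(2k,k)`.
-/

open Filter Topology

namespace Padic

variable {p : ℕ} [Fact p.Prime]

lemma norm_natCast_inv {n : ℕ} (hn : n ≠ 0) :
    ‖(n : ℚ_[p])‖⁻¹ = (p : ℝ) ^ padicValNat p n := by
  rw [norm_eq_zpow_neg_valuation (Nat.cast_ne_zero.2 hn), valuation_natCast, zpow_neg, inv_inv,
    zpow_natCast]

lemma norm_choose_inv_le {n : ℕ} (hn : 0 < n) (k : ℕ) : ‖(n.choose k : ℚ_[p])‖⁻¹ ≤ n := by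
  rcases eq_or_ne (n.choose k) 0 with h | h
  · simp [h]
  rw [norm_natCast_inv h, ← Nat.factorization_def _ Fact.out]
  exact_mod_cast Nat.pow_factorization_choose_le hn

lemma tendsto_pow_div_choose_two_mul {x : ℚ_[p]} (hx : ‖x‖ < 1) :
    Tendsto (fun k : ℕ => x ^ (k - 1) / ((2 * k).choose k : ℚ_[p])) atTop (𝓝 0) := by
  rw [← tendsto_add_atTop_iff_nat 1, tendsto_zero_iff_norm_tendsto_zero]
  set r := ‖x‖
  have hr : 0 ≤ r := norm_nonneg x
  have hbound : Tendsto (fun k : ℕ => 2 * (k * r ^ k) + 2 * r ^ k) atTop (𝓝 0) := by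
    simpa using ((tendsto_self_mul_const_pow_of_lt_one hr hx).const_mul 2).add
      ((tendsto_pow_atTop_nhds_zero_of_lt_one hr hx).const_mul 2)
  refine squeeze_zero (fun _ => norm_nonneg _) (fun k => ?_) hbound
  calc ‖x ^ (k + 1 - 1) / ((2 * (k + 1)).choose (k + 1) : ℚ_[p])‖
      = r ^ k * ‖((2 * (k + 1)).choose (k + 1) : ℚ_[p])‖⁻¹ := by
        rw [norm_div, norm_pow, Nat.add_sub_cancel, div_eq_mul_inv]
    _ ≤ r ^ k * (2 * (k + 1) : ℕ) := by
        gcongr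
        exact norm_choose_inv_le (by omega) _
    _ = 2 * (k * r ^ k) + 2 * r ^ k := by push_cast; ring

end Padic

namespace PadicInt

variable {p : ℕ} [Fact p.Prime]

instance : IsBoundedSMul ℤ_[p] ℚ_[p] :=
  .of_norm_smul_le fun r x => by rw [Algebra.smul_def, norm_mul]; rfl

lemma exists_continuousMap_natCast_eq_sum_choose_mul {a : ℕ → ℚ_[p]}
    (ha : Tendsto a atTop (𝓝 0)) :
    ∃ f : C(ℤ_[p], ℚ_[p]), ∀ n : ℕ, f n = ∑ k ∈ Finset.range (n + 1), n.choose k * a k :=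
  ⟨mahlerSeries a, fun n => by simp [mahlerSeries_apply_nat ha le_rfl, nsmul_eq_mul]⟩

end PadicInt

/-- For a prime `p` and `t ∈ p·ℤ_p`, the function given on nonnegative integers `n` by
`f(n) = ∑_{k=1}^{n} C(n,k) t^{k-1} / C(2k,k)` extends to a continuous function on `ℤ_p`;
equivalently the Mahler coefficients `t^{k-1}/C(2k,k)` tend to `0` in `ℚ_p`. -/
theorem stmt_3 (p : ℕ) [Fact p.Prime] (t : ℤ_[p]) (ht : (p : ℤ_[p]) ∣ t) :
    (∃ f : C(ℤ_[p], ℚ_[p]), ∀ n : ℕ,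
        f (n : ℤ_[p]) = ∑ k ∈ Finset.Icc 1 n,
          (Nat.choose n k : ℚ_[p]) * (t : ℚ_[p]) ^ (k - 1) /
            (Nat.choose (2 * k) k : ℚ_[p])) ∧
      Tendsto (fun k : ℕ => (t : ℚ_[p]) ^ (k - 1) / (Nat.choose (2 * k) k : ℚ_[p]))
        atTop (nhds 0) := by
  set c := fun k : ℕ => (t : ℚ_[p]) ^ (k - 1) / (Nat.choose (2 * k) k : ℚ_[p])
  have hc : Tendsto c atTop (𝓝 0) := Padic.tendsto_pow_div_choose_two_mul <| by
    rwa [PadicInt.padic_norm_e_of_padicInt, PadicInt.norm_lt_one_iff_dvd]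
  -- `c 0 = 1` is not a coefficient of `f`, so it is replaced by `0`.
  have hc₀ : Tendsto (Function.update c 0 0) atTop (𝓝 0) := by
    rw [← tendsto_add_atTop_iff_nat 1] at hc ⊢
    exact hc.congr fun k => (Function.update_of_ne k.succ_ne_zero _ _).symm
  obtain ⟨f, hf⟩ := PadicInt.exists_continuousMap_natCast_eq_sum_choose_mul hc₀
  refine ⟨⟨f, fun n => ?_⟩, hc⟩
  rw [hf, Finset.range_eq_Ico, Finset.Ico_add_one_right_eq_Icc,
    ← Finset.insert_Icc_add_one_left_eq_Icc n.zero_le, Finset.sum_insert (by simp),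
    Function.update_self, mul_zero, zero_add]
  refine Finset.sum_congr rfl fun k hk => ?_
  rw [Function.update_of_ne (Nat.one_le_iff_ne_zero.1 (Finset.mem_Icc.1 hk).1), mul_div_assoc]
end

section
/- As formal power series in z with w = 1 - z, one has the identity ∑_{k≥1} (1/C(2k,k)) C(x,k) ((w - w^{-1})²)^{k-1}, expanded as ∑_{n≥0} b_n((w-w^{-1})²) xⁿ, satisfies b₁((w - w^{-1})²) = (w² - w^{-2})^{-1} · log(w²), where log(w²) = -2∑_{m≥1} z'^m/m with w² = 1 - z' (i.e. the usual formal logarithm of w² around 1). -/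
/-- `w = 1 - z` as a formal power series in `z` over `ℚ`. -/
noncomputable def wPS : PowerSeries ℚ := 1 - PowerSeries.X

/-- The formal logarithm `log(w²) = -∑_{m≥1} z'^m/m` where `w² = 1 - z'`,
defined coefficientwise (the coefficient of `zⁿ` only involves terms with `m ≤ n`,
since `z' = 1 - w²` has zero constant term). -/
noncomputable def logwSq : PowerSeries ℚ :=
  PowerSeries.mk fun n =>
    PowerSeries.coeff (R := ℚ) n (∑ m ∈ Finset.Icc 1 n, (-(1 : ℚ) / m) • (1 - wPS ^ 2) ^ m)

/-!
Write `A = w² - w⁻²`, `t = (w - w⁻¹)²` and `q = 1 - w²`. Both sides vanish at `z = 0` and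
have derivative `-2/w`: for `log(w²)` because `w q' = 2w² = 2(1 - q)` makes the partial sums
telescope, for `A · b₁(t)` because `w t' = -2A`, `w A' = -2(t + 2)` and `A² = t(t + 4)`, together
with `2(2k+1) c_{k+1} = -k c_k` for the coefficients `c_k` of `b₁`. Truncating both series
changes the derivative only by multiples of `tᴺ` and `qᴺ`, which do not reach the coefficients
in question.
-/

namespace PowerSeries

variable {R : Type*} [CommSemiring R]

theorem derivative_sq (f : R⟦X⟧) : d⁄dX R (f ^ 2) = 2 * f * d⁄dX R f := by
  rw [derivative_pow]; norm_num

theorem X_pow_succ_dvd_of_X_pow_dvd_derivative [IsAddTorsionFree R] {f : R⟦X⟧} {n : ℕ}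
    (h0 : constantCoeff f = 0) (hd : X ^ n ∣ d⁄dX R f) : X ^ (n + 1) ∣ f := by
  rw [X_pow_dvd_iff] at hd ⊢
  rintro (_ | m) hm
  · rwa [coeff_zero_eq_constantCoeff]
  · have h := hd m (by omega)
    rwa [coeff_derivative, mul_comm, ← Nat.cast_succ, ← nsmul_eq_mul,
      nsmul_eq_zero_iff_right m.succ_ne_zero] at h

end PowerSeries

namespace LogwSq

open PowerSeries

noncomputable def A : ℚ⟦X⟧ := wPS ^ 2 - wPS⁻¹ ^ 2

noncomputable def t : ℚ⟦X⟧ := (wPS - wPS⁻¹) ^ 2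

noncomputable def q : ℚ⟦X⟧ := 1 - wPS ^ 2

/-- The coefficient `c_k` of `t^(k-1)` in `b₁(t)`. -/
noncomputable def bOneCoeff (k : ℕ) : ℚ := (-1 : ℚ) ^ (k - 1) / (k * Nat.centralBinom k)

noncomputable def scaledBOnePartialSum (K : ℕ) : ℚ⟦X⟧ :=
  A * ∑ k ∈ Finset.Icc 1 K, bOneCoeff k • t ^ (k - 1)

noncomputable def logPartialSum (K : ℕ) : ℚ⟦X⟧ := ∑ m ∈ Finset.Icc 1 K, (-(1 : ℚ) / m) • q ^ m

theorem constantCoeff_w : constantCoeff wPS = 1 := by simp [wPS]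

theorem isUnit_w : IsUnit wPS :=
  isUnit_iff_constantCoeff.mpr (constantCoeff_w ▸ isUnit_one)

theorem w_mul_inv : wPS * wPS⁻¹ = 1 :=
  PowerSeries.mul_inv_cancel _ (by rw [constantCoeff_w]; exact one_ne_zero)

theorem derivative_w : d⁄dX ℚ wPS = -1 := by simp [wPS]

theorem derivative_w_inv : d⁄dX ℚ wPS⁻¹ = wPS⁻¹ ^ 2 := by
  rw [derivative_inv', derivative_w]; ring

theorem A_sq : A ^ 2 = t * (t + 4) := by
  unfold A t; linear_combination (4 * (wPS - wPS⁻¹) ^ 2) * w_mul_inv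

theorem w_mul_derivative_t : wPS * d⁄dX ℚ t = -2 * A := by
  rw [t, derivative_sq, map_sub, derivative_w, derivative_w_inv, A]
  linear_combination (2 * wPS⁻¹ ^ 2 - 2 * wPS * wPS⁻¹) * w_mul_inv

theorem w_mul_derivative_A : wPS * d⁄dX ℚ A = -2 * (t + 2) := by
  rw [A, map_sub, derivative_sq, derivative_sq, derivative_w, derivative_w_inv, t]
  linear_combination (-2 * wPS⁻¹ ^ 2 - 4) * w_mul_inv

theorem w_mul_derivative_q : wPS * d⁄dX ℚ q = 2 * (1 - q) := by
  simp only [q, map_sub, derivative_one, derivative_sq, derivative_w]; ring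

theorem w_mul_derivative_t_pow_succ (k : ℕ) :
    wPS * d⁄dX ℚ (t ^ (k + 1)) = -2 * (k + 1) * A * t ^ k := by
  rw [derivative_pow, Nat.add_sub_cancel]
  push_cast
  linear_combination ((k + 1) * t ^ k) * w_mul_derivative_t

theorem w_mul_derivative_A_mul_t_pow (k : ℕ) :
    wPS * d⁄dX ℚ (A * t ^ k) = -(2 * k + 2) * t ^ (k + 1) - (8 * k + 4) * t ^ k := by
  rcases k with _ | k
  · simp only [pow_zero, mul_one, w_mul_derivative_A]; push_cast; ring
  · rw [Derivation.leibniz, smul_eq_mul, smul_eq_mul, mul_add, mul_left_comm, mul_left_comm wPS,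
      w_mul_derivative_t_pow_succ, w_mul_derivative_A]
    push_cast
    linear_combination (-2 * (k + 1) * t ^ k) * A_sq

theorem w_mul_derivative_q_pow_succ (m : ℕ) :
    wPS * d⁄dX ℚ (q ^ (m + 1)) = 2 * (m + 1) * (1 - q) * q ^ m := by
  rw [derivative_pow, Nat.add_sub_cancel]
  push_cast
  linear_combination ((m + 1) * q ^ m) * w_mul_derivative_q

theorem bOneCoeff_one : bOneCoeff 1 = 1 / 2 := by
  norm_num [bOneCoeff, show Nat.centralBinom 1 = 2 from rfl]

theorem bOneCoeff_succ_succ (k : ℕ) :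
    (8 * k + 12) * bOneCoeff (k + 2) = -(2 * k + 2) * bOneCoeff (k + 1) := by
  have h : ((k + 2 : ℕ) : ℚ) * Nat.centralBinom (k + 2)
      = 2 * (2 * (k + 1 : ℕ) + 1) * Nat.centralBinom (k + 1) := by
    exact_mod_cast Nat.succ_mul_centralBinom_succ (k + 1)
  have hpos : (0 : ℚ) < Nat.centralBinom (k + 1) := by exact_mod_cast Nat.centralBinom_pos _
  simp only [bOneCoeff, Nat.add_sub_cancel, h]
  push_cast
  field_simp
  ring

theorem w_mul_derivative_scaledBOnePartialSum (K : ℕ) :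
    wPS * d⁄dX ℚ (scaledBOnePartialSum (K + 1))
      = -2 - (2 * (K + 1) * bOneCoeff (K + 1)) • t ^ (K + 1) := by
  induction K with
  | zero =>
    simp only [zero_add, scaledBOnePartialSum, Finset.Icc_self, Finset.sum_singleton, bOneCoeff_one,
      Nat.sub_self, pow_zero, mul_one, mul_smul_comm, Derivation.map_smul, w_mul_derivative_A]
    have half : C (1 / 2 : ℚ) * 2 = 1 := by rw [← map_ofNat C 2, ← map_mul]; norm_num
    simp only [smul_eq_C_mul, map_mul, map_add, map_zero, map_one, map_ofNat, Nat.cast_zero]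
    linear_combination -2 * half
  | succ K ih =>
    have hsum : scaledBOnePartialSum (K + 2)
        = scaledBOnePartialSum (K + 1) + bOneCoeff (K + 2) • (A * t ^ (K + 1)) := by
      rw [scaledBOnePartialSum, scaledBOnePartialSum, Finset.sum_Icc_succ_top (by omega),
        mul_add, Nat.add_sub_cancel, mul_smul_comm]
    rw [hsum, map_add, Derivation.map_smul, mul_add, mul_smul_comm, ih,
      w_mul_derivative_A_mul_t_pow]
    have hc := congrArg C (bOneCoeff_succ_succ K)
    simp only [smul_eq_C_mul, map_mul, map_add, map_neg, map_natCast, map_ofNat, map_one] at hc ⊢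
    push_cast
    linear_combination (-t ^ (K + 1)) * hc

theorem w_mul_derivative_logPartialSum (K : ℕ) :
    wPS * d⁄dX ℚ (logPartialSum K) = -2 + 2 * q ^ K := by
  induction K with
  | zero => simp [logPartialSum]
  | succ K ih =>
    rw [logPartialSum, Finset.sum_Icc_succ_top (by omega), ← logPartialSum, map_add,
      Derivation.map_smul, mul_add, mul_smul_comm, ih, w_mul_derivative_q_pow_succ, smul_eq_C_mul]
    have hK : C (-(1 : ℚ) / (K + 1 : ℕ)) * (K + 1) = -1 := by
      rw [← map_natCast C, ← map_one C, ← map_add, ← map_mul, ← map_neg]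
      congr 1
      push_cast
      field_simp
    linear_combination (2 * (1 - q) * q ^ K) * hK

theorem X_dvd_A : X ∣ A := by
  rw [X_dvd_iff, A]; simp [constantCoeff_w]

theorem X_dvd_t : X ∣ t := by
  rw [X_dvd_iff, t]; simp [constantCoeff_w]

theorem X_dvd_q : X ∣ q := by
  rw [X_dvd_iff, q]; simp [constantCoeff_w]

theorem X_pow_succ_dvd_scaledBOnePartialSum_sub_logPartialSum (n : ℕ) :
    X ^ (n + 1) ∣ scaledBOnePartialSum (n + 1) - logPartialSum n := by
  apply X_pow_succ_dvd_of_X_pow_dvd_derivative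
  · rw [← X_dvd_iff]
    refine dvd_sub (dvd_mul_of_dvd_left X_dvd_A _) (Finset.dvd_sum fun m hm => ?_)
    rw [smul_eq_C_mul]
    exact dvd_mul_of_dvd_right (dvd_pow X_dvd_q (by simp at hm; omega)) _
  · rw [← isUnit_w.dvd_mul_left, map_sub, mul_sub, w_mul_derivative_scaledBOnePartialSum,
      w_mul_derivative_logPartialSum]
    have ht : X ^ n ∣ t ^ (n + 1) := (pow_dvd_pow X n.le_succ).trans (pow_dvd_pow_of_dvd X_dvd_t _)
    have hq : X ^ n ∣ q ^ n := pow_dvd_pow_of_dvd X_dvd_q n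
    convert (ht.mul_left (C (-(2 * (n + 1) * bOneCoeff (n + 1))))).sub (hq.mul_left 2) using 1
    rw [smul_eq_C_mul, map_neg]
    ring

end LogwSq

/-- As formal power series in `z` with `w = 1 - z`, the coefficient `b₁` of `x` in
`∑_{k≥1} C(x,k)/C(2k,k) ((w - w⁻¹)²)^{k-1}` satisfies
`b₁((w - w⁻¹)²) = (w² - w⁻²)⁻¹ log(w²)`, stated (after clearing the non-invertible
factor `w² - w⁻²`) coefficientwise; the coefficient of `zⁿ` of the infinite sum over
`k` only involves the terms with `k ≤ n + 1`, since `(w - w⁻¹)²` has zero constant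
term.  Here `b₁(t) = ∑_{k≥1} (-1)^{k-1} t^{k-1}/(k·C(2k,k))`. -/
theorem stmt_5 (n : ℕ) :
    PowerSeries.coeff (R := ℚ) n
        ((wPS ^ 2 - (wPS⁻¹) ^ 2) *
          ∑ k ∈ Finset.Icc 1 (n + 1),
            (((-1 : ℚ) ^ (k - 1) / (k * Nat.choose (2 * k) k)) •
              ((wPS - wPS⁻¹) ^ 2) ^ (k - 1))) =
      PowerSeries.coeff (R := ℚ) n logwSq := by
  have h := PowerSeries.X_pow_dvd_iff.mp
    (LogwSq.X_pow_succ_dvd_scaledBOnePartialSum_sub_logPartialSum n) n n.lt_succ_self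
  rw [map_sub, sub_eq_zero] at h
  rwa [logwSq, PowerSeries.coeff_mk]
end

section
/- Let b₁(t) := ∑_{k≥1} (-t)^{k-1}/(k · C(2k,k)), regarded as a convergent series in ℂ (or as a formal power series in t around 0). Then b₁((w - 1/w)²) = log(w²)/(w² - w^{-2}) for real w near 1. -/
lemma aux_beta (k : ℕ) :
    ∫ u in (0:ℝ)..1, (u * (1 - u)) ^ k
      = (k.factorial : ℝ) * k.factorial / ((2 * k + 1).factorial : ℝ) := by
  have hre : 0 < Complex.re ((k : ℂ) + 1) := by
    simp only [Complex.add_re, Complex.natCast_re, Complex.one_re]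
    positivity
  have h := Complex.betaIntegral_eval_nat_add_one_right hre k
  have hbeta : Complex.betaIntegral ((k:ℂ)+1) ((k:ℂ)+1)
      = ((∫ u in (0:ℝ)..1, (u * (1 - u)) ^ k : ℝ) : ℂ) := by
    rw [Complex.betaIntegral, ← intervalIntegral.integral_ofReal]
    refine intervalIntegral.integral_congr fun x _ => ?_
    rw [add_sub_cancel_right, Complex.cpow_natCast, Complex.cpow_natCast]
    push_cast
    rw [← mul_pow, mul_one_sub]
  have hprod : ∀ m : ℕ, (k.factorial * ∏ j ∈ Finset.range m, (k + 1 + j)) = (k + m).factorial := by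
    intro m
    induction m with
    | zero => simp
    | succ n ih =>
      rw [Finset.prod_range_succ, ← mul_assoc, ih, show k + (n+1) = (k+n)+1 from rfl,
        Nat.factorial_succ]
      ring
  have hprodC : (∏ j ∈ Finset.range (k+1), ((k:ℂ) + 1 + j)) * (k.factorial : ℂ)
      = (((2*k+1).factorial : ℕ) : ℂ) := by
    have h1 := hprod (k+1)
    rw [show k + (k+1) = 2*k+1 by ring] at h1
    calc (∏ j ∈ Finset.range (k+1), ((k:ℂ) + 1 + j)) * (k.factorial : ℂ)
        = ((k.factorial * ∏ j ∈ Finset.range (k+1), (k + 1 + j) : ℕ) : ℂ) := by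
          push_cast; ring
      _ = _ := by rw [h1]
  have hfne : ∀ m : ℕ, ((m.factorial : ℕ) : ℂ) ≠ 0 :=
    fun m => Nat.cast_ne_zero.2 m.factorial_ne_zero
  have hPne : (∏ j ∈ Finset.range (k+1), ((k:ℂ) + 1 + j)) ≠ 0 := by
    intro h0
    rw [h0, zero_mul] at hprodC
    exact hfne (2*k+1) hprodC.symm
  have key : ((∫ u in (0:ℝ)..1, (u * (1 - u)) ^ k : ℝ) : ℂ)
      = ((k.factorial : ℕ) : ℂ) * ((k.factorial : ℕ) : ℂ) / (((2*k+1).factorial : ℕ) : ℂ) := by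
    rw [← hbeta, h, div_eq_div_iff hPne (hfne _)]
    linear_combination (-((k.factorial : ℕ) : ℂ)) * hprodC
  have := key
  rw [show (((k.factorial : ℕ) : ℂ) * ((k.factorial : ℕ) : ℂ) / (((2*k+1).factorial : ℕ) : ℂ))
      = (((k.factorial : ℝ) * k.factorial / ((2 * k + 1).factorial : ℝ) : ℝ) : ℂ) by push_cast; ring] at this
  exact_mod_cast this

-- term identity
lemma aux_term (k : ℕ) (r : ℝ) :
    r ^ k / ((k + 1 : ℝ) * (Nat.choose (2 * (k + 1)) (k + 1) : ℝ))
      = ∫ u in (0:ℝ)..1, (1/2) * (r * (u * (1 - u))) ^ k := by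
  have hnat : (2*(k+1)).choose (k+1) * (k+1).factorial * (k+1).factorial = (2*(k+1)).factorial := by
    have := Nat.choose_mul_factorial_mul_factorial (show k+1 ≤ 2*(k+1) by omega)
    simpa [show 2*(k+1) - (k+1) = k+1 by omega] using this
  have hC : ((2*(k+1)).choose (k+1) : ℝ) * ((k+1) * k.factorial) * ((k+1) * k.factorial)
      = (2*k+2) * ((2*k+1).factorial) := by
    have h2 : (2*(k+1)) = (2*k+1)+1 := by ring
    rw [h2, Nat.factorial_succ, Nat.factorial_succ] at hnat
    exact_mod_cast hnat
  have hk1 : ((k:ℝ)+1) ≠ 0 := by positivity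
  have key : ((k:ℝ)+1) * ((2*(k+1)).choose (k+1) : ℝ) * ((k.factorial : ℝ) * k.factorial)
      = 2 * ((2*k+1).factorial : ℝ) := by
    refine mul_left_cancel₀ hk1 ?_
    push_cast at hC ⊢
    linear_combination hC
  have hint : ∫ u in (0:ℝ)..1, (1/2) * (r * (u * (1 - u))) ^ k
      = (1/2) * r ^ k * ((k.factorial : ℝ) * k.factorial / ((2 * k + 1).factorial : ℝ)) := by
    rw [← aux_beta k, ← intervalIntegral.integral_const_mul]
    refine intervalIntegral.integral_congr fun x _ => ?_
    rw [mul_pow]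
    ring
  rw [hint]
  have hCpos : (0:ℝ) < ((2*(k+1)).choose (k+1) : ℝ) := by
    exact_mod_cast Nat.choose_pos (show k+1 ≤ 2*(k+1) by omega)
  have hfpos : (0:ℝ) < ((2*k+1).factorial : ℝ) := by exact_mod_cast (2*k+1).factorial_pos
  rw [div_eq_iff (by positivity)]
  field_simp
  linear_combination (-(r^k)) * key



lemma aux_ftc (w : ℝ) (hw₁ : 1 / 2 < w) (hw₂ : w < 2) (hw : w ≠ 1) :
    ∫ u in (0:ℝ)..1, (1/2) * (1 - (-(w - w⁻¹) ^ 2) * (u * (1 - u)))⁻¹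
      = Real.log (w ^ 2) / (w ^ 2 - w⁻¹ ^ 2) := by
  have hw0 : 0 < w := by linarith
  have hinv : w * w⁻¹ = 1 := mul_inv_cancel₀ hw0.ne'
  have hwi0 : 0 < w⁻¹ := inv_pos.2 hw0
  have hwi1 : 1/2 < w⁻¹ := by nlinarith
  have hwi2 : w⁻¹ < 2 := by nlinarith
  have hsum_ne : w + w⁻¹ ≠ 0 := by positivity
  have hs0 : w - w⁻¹ ≠ 0 := by
    intro h
    have h1 : (w - 1) * (w + 1) = 0 := by nlinarith
    rcases mul_eq_zero.1 h1 with h2 | h2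
    · exact hw (by linarith)
    · linarith
  have hPQ : ∀ u : ℝ, ((1-u)*w⁻¹ + u*w) * ((1-u)*w + u*w⁻¹)
      = 1 - (-(w - w⁻¹) ^ 2) * (u * (1 - u)) := by
    intro u
    linear_combination hinv
  have hPpos : ∀ u ∈ Set.Icc (0:ℝ) 1, 0 < (1-u)*w⁻¹ + u*w := by
    intro u hu
    nlinarith [hu.1, hu.2]
  have hQpos : ∀ u ∈ Set.Icc (0:ℝ) 1, 0 < (1-u)*w + u*w⁻¹ := by
    intro u hu
    nlinarith [hu.1, hu.2]
  set c : ℝ := 1/(2*(w+w⁻¹)*(w-w⁻¹)) with hc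
  have hne2 : 2*(w+w⁻¹)*(w-w⁻¹) ≠ 0 := mul_ne_zero (mul_ne_zero two_ne_zero hsum_ne) hs0
  have hc2 : c * ((w - w⁻¹) * (w + w⁻¹)) = 1/2 := by
    rw [hc, div_mul_eq_mul_div, one_mul, div_eq_iff hne2]
    ring
  have hderiv : ∀ u ∈ Set.uIcc (0:ℝ) 1,
      HasDerivAt (fun x => c * (Real.log ((1-x)*w⁻¹ + x*w) - Real.log ((1-x)*w + x*w⁻¹)))
        ((1/2) * (1 - (-(w - w⁻¹) ^ 2) * (u * (1 - u)))⁻¹) u := by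
    intro u hu
    rw [Set.uIcc_of_le zero_le_one] at hu
    have hPu := hPpos u hu
    have hQu := hQpos u hu
    have hp : HasDerivAt (fun x : ℝ => (1-x)*w⁻¹ + x*w) (w - w⁻¹) u := by
      have h' := (((hasDerivAt_id u).const_sub 1).mul_const w⁻¹).add ((hasDerivAt_id u).mul_const w)
      refine h'.congr_deriv ?_
      ring
    have hq : HasDerivAt (fun x : ℝ => (1-x)*w + x*w⁻¹) (w⁻¹ - w) u := by
      have h' := (((hasDerivAt_id u).const_sub 1).mul_const w).add ((hasDerivAt_id u).mul_const w⁻¹)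
      refine h'.congr_deriv ?_
      ring
    have hF := ((hp.log hPu.ne').sub (hq.log hQu.ne')).const_mul c
    refine hF.congr_deriv ?_
    symm
    rw [div_sub_div _ _ hPu.ne' hQu.ne', ← hPQ u]
    have hnum : (w - w⁻¹) * ((1-u)*w + u*w⁻¹) - ((1-u)*w⁻¹ + u*w) * (w⁻¹ - w)
        = (w - w⁻¹) * (w + w⁻¹) := by ring
    rw [hnum, ← hc2, div_eq_mul_inv]
    ring
  have hcont : IntervalIntegrable
      (fun u : ℝ => (1/2) * (1 - (-(w - w⁻¹) ^ 2) * (u * (1 - u)))⁻¹)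
      MeasureTheory.volume 0 1 := by
    apply ContinuousOn.intervalIntegrable
    apply ContinuousOn.mul continuousOn_const
    apply ContinuousOn.inv₀
    · fun_prop
    · intro u hu
      rw [Set.uIcc_of_le zero_le_one] at hu
      rw [← hPQ u]
      exact (mul_pos (hPpos u hu) (hQpos u hu)).ne'
  rw [intervalIntegral.integral_eq_sub_of_hasDerivAt hderiv hcont]
  have h1 : (1-(1:ℝ))*w⁻¹ + 1*w = w := by ring
  have h2 : (1-(1:ℝ))*w + 1*w⁻¹ = w⁻¹ := by ring
  have h3 : (1-(0:ℝ))*w⁻¹ + 0*w = w⁻¹ := by ring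
  have h4 : (1-(0:ℝ))*w + 0*w⁻¹ = w := by ring
  rw [h1, h2, h3, h4, Real.log_inv, Real.log_pow]
  have hden : w^2 - w⁻¹^2 = (w + w⁻¹)*(w - w⁻¹) := by ring
  rw [hden, eq_div_iff (mul_ne_zero hsum_ne hs0)]
  push_cast
  linear_combination (4*Real.log w) * hc2

open MeasureTheory

/-- `b₁(t) := ∑_{k≥1} (-t)^{k-1}/(k · C(2k,k))` satisfies
`b₁((w - 1/w)²) = log(w²)/(w² - w⁻²)` for real `w` near `1`. -/
theorem stmt_6 (w : ℝ) (hw₁ : 1 / 2 < w) (hw₂ : w < 2) (hw : w ≠ 1) :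
    ∑' k : ℕ, (-(w - w⁻¹) ^ 2) ^ k /
        ((k + 1 : ℝ) * (Nat.choose (2 * (k + 1)) (k + 1) : ℝ)) =
      Real.log (w ^ 2) / (w ^ 2 - w⁻¹ ^ 2) := by
  have hw0 : 0 < w := by linarith
  have hinv : w * w⁻¹ = 1 := mul_inv_cancel₀ hw0.ne'
  have hwi1 : 1/2 < w⁻¹ := by nlinarith
  have hwi2 : w⁻¹ < 2 := by nlinarith
  have hs4 : (w - w⁻¹)^2 < 4 := by nlinarith
  set r : ℝ := -(w - w⁻¹)^2 with hr
  have hq1 : (w - w⁻¹)^2/4 < 1 := by linarith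
  have hq0 : (0:ℝ) ≤ (w - w⁻¹)^2/4 := by positivity
  have habs : ∀ u : ℝ, u ∈ Set.Ioc (0:ℝ) 1 → ‖r * (u * (1-u))‖ = (w-w⁻¹)^2 * (u*(1-u)) := by
    intro u hu
    have h1 : 0 ≤ u*(1-u) := mul_nonneg hu.1.le (by linarith [hu.2])
    rw [hr, Real.norm_eq_abs, neg_mul, abs_neg, abs_of_nonneg (by positivity)]
  have hub : ∀ u : ℝ, u ∈ Set.Ioc (0:ℝ) 1 → (w-w⁻¹)^2 * (u*(1-u)) ≤ (w-w⁻¹)^2/4 := by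
    intro u hu
    nlinarith [sq_nonneg (u - 1/2), sq_nonneg (w - w⁻¹), sq_nonneg ((w-w⁻¹)*(u-1/2))]
  have hHS : HasSum (fun k : ℕ => ∫ u in Set.Ioc (0:ℝ) 1, (1/2) * (r * (u * (1 - u))) ^ k)
      (∫ u in Set.Ioc (0:ℝ) 1, (1/2) * (1 - r * (u * (1 - u)))⁻¹) := by
    apply MeasureTheory.hasSum_integral_of_dominated_convergence
      (bound := fun k (_ : ℝ) => (1/2) * ((w - w⁻¹)^2/4)^k)
    · intro k
      apply Continuous.aestronglyMeasurable
      fun_prop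
    · intro k
      filter_upwards [ae_restrict_mem measurableSet_Ioc] with u hu
      rw [norm_mul, norm_pow]
      have : ‖(1:ℝ)/2‖ = 1/2 := by norm_num
      rw [this]
      gcongr
      rw [habs u hu]
      exact hub u hu
    · exact Filter.Eventually.of_forall fun _ => (summable_geometric_of_lt_one hq0 hq1).mul_left _
    · exact integrable_const _
    · filter_upwards [ae_restrict_mem measurableSet_Ioc] with u hu
      have hnorm : ‖r * (u * (1-u))‖ < 1 := by
        rw [habs u hu]
        linarith [hub u hu]
      exact (hasSum_geometric_of_norm_lt_one hnorm).mul_left _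
  calc ∑' k : ℕ, r ^ k / ((k + 1 : ℝ) * (Nat.choose (2 * (k + 1)) (k + 1) : ℝ))
      = ∑' k : ℕ, ∫ u in Set.Ioc (0:ℝ) 1, (1/2) * (r * (u * (1 - u))) ^ k := by
        refine tsum_congr fun k => ?_
        rw [aux_term k r, intervalIntegral.integral_of_le zero_le_one]
    _ = ∫ u in Set.Ioc (0:ℝ) 1, (1/2) * (1 - r * (u * (1 - u)))⁻¹ := hHS.tsum_eq
    _ = ∫ u in (0:ℝ)..1, (1/2) * (1 - r * (u * (1 - u)))⁻¹ :=
        (intervalIntegral.integral_of_le zero_le_one).symm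
    _ = Real.log (w ^ 2) / (w ^ 2 - w⁻¹ ^ 2) := aux_ftc w hw₁ hw₂ hw
end

section
/- The sequence C(2·3^s, 3^s) (s = 0, 1, 2, …) converges in ℤ₃; more generally, for any prime p, the sequence C(2p^s, p^s) converges in ℤ_p as s → ∞. -/
open Filter Finset

/-!
Write `N = p m` and split the products `N! = ∏_{k ≤ N} k` and `N! C(2N, N) = ∏_{k ≤ N} (N + k)`
according to whether `p ∣ k`. The multiples of `p` contribute `p^m m!` and `p^m m! C(2m, m)`,
so `C(2N, N) u = C(2m, m) v`, where `u = ∏' k` and `v = ∏' (N + k)` run over the `k ≤ N` prime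
to `p`. Since `v ≡ u mod N` and `u` is prime to `p`, `C(2pm, pm) ≡ C(2m, m) mod p^(k+1)` whenever
`p^k ∣ m`. For `m = p^s` consecutive terms of the sequence are therefore `p^-(s+1)`-close, so it is
Cauchy in the complete space `ℤ_[p]`.
-/

namespace Nat

theorem prod_Ico_add_self_eq_factorial_mul_choose (n : ℕ) :
    ∏ k ∈ Ico 1 (n + 1), (n + k) = n ! * (2 * n).choose n := by
  rw [prod_Ico_eq_prod_range, two_mul, ← ascFactorial_eq_factorial_mul_choose,
    ascFactorial_eq_prod_range, add_tsub_cancel_right]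
  exact prod_congr rfl fun i _ => by ring

variable {p : ℕ}

theorem prod_Ico_filter_dvd_eq (hp : 0 < p) (m : ℕ) (f : ℕ → ℕ) :
    ∏ k ∈ Ico 1 (p * m + 1) with p ∣ k, f k = ∏ j ∈ Ico 1 (m + 1), f (p * j) := by
  symm
  refine prod_nbij (p * ·) ?_ ?_ ?_ fun _ _ => rfl
  · intro j hj
    rw [mem_Ico] at hj
    rw [mem_filter, mem_Ico]
    exact ⟨⟨by nlinarith, by nlinarith⟩, dvd_mul_right p j⟩
  · exact fun a _ b _ h => Nat.eq_of_mul_eq_mul_left hp h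
  · intro k hk
    rw [coe_filter, Set.mem_ofPred_eq, mem_Ico] at hk
    obtain ⟨⟨hk_pos, hk_le⟩, j, rfl⟩ := hk
    exact ⟨j, mem_Ico.2 ⟨by nlinarith, by nlinarith⟩, rfl⟩

theorem prod_Ico_eq_prod_dvd_mul_prod_not_dvd (hp : 0 < p) (m : ℕ) (f : ℕ → ℕ) :
    ∏ k ∈ Ico 1 (p * m + 1), f k =
      (∏ j ∈ Ico 1 (m + 1), f (p * j)) * ∏ k ∈ Ico 1 (p * m + 1) with ¬p ∣ k, f k := by
  rw [← prod_filter_mul_prod_filter_not _ (p ∣ ·), prod_Ico_filter_dvd_eq hp]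

theorem prod_Ico_const_mul (m : ℕ) (g : ℕ → ℕ) :
    ∏ j ∈ Ico 1 (m + 1), p * g j = p ^ m * ∏ j ∈ Ico 1 (m + 1), g j := by
  simp [prod_mul_distrib]

theorem choose_mul_prod_not_dvd (hp : 0 < p) (m : ℕ) :
    (2 * (p * m)).choose (p * m) * ∏ k ∈ Ico 1 (p * m + 1) with ¬p ∣ k, k =
      (2 * m).choose m * ∏ k ∈ Ico 1 (p * m + 1) with ¬p ∣ k, (p * m + k) := by
  set u := ∏ k ∈ Ico 1 (p * m + 1) with ¬p ∣ k, k
  set v := ∏ k ∈ Ico 1 (p * m + 1) with ¬p ∣ k, (p * m + k)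
  have hfact : (p * m)! = p ^ m * m ! * u := by
    rw [← prod_Ico_id_eq_factorial, prod_Ico_eq_prod_dvd_mul_prod_not_dvd hp m fun k => k]
    rw [prod_Ico_const_mul m fun j => j, prod_Ico_id_eq_factorial]
  have hrising :
      (p * m)! * (2 * (p * m)).choose (p * m) = p ^ m * (m ! * (2 * m).choose m) * v := by
    rw [← prod_Ico_add_self_eq_factorial_mul_choose, prod_Ico_eq_prod_dvd_mul_prod_not_dvd hp m,
      ← prod_Ico_add_self_eq_factorial_mul_choose]
    simp only [← mul_add, prod_Ico_const_mul, v]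
  refine Nat.eq_of_mul_eq_mul_left (Nat.mul_pos (Nat.pow_pos (n := m) hp) m.factorial_pos) ?_
  calc p ^ m * m ! * ((2 * (p * m)).choose (p * m) * u)
      = (p * m)! * (2 * (p * m)).choose (p * m) := by rw [hfact]; ring
    _ = p ^ m * m ! * ((2 * m).choose m * v) := by rw [hrising]; ring

theorem choose_two_mul_prime_mul_modEq (hp : p.Prime) {m k : ℕ} (hk : p ^ k ∣ m) :
    (2 * (p * m)).choose (p * m) ≡ (2 * m).choose m [MOD p ^ (k + 1)] := by
  set u := ∏ i ∈ Ico 1 (p * m + 1) with ¬p ∣ i, i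
  set v := ∏ i ∈ Ico 1 (p * m + 1) with ¬p ∣ i, (p * m + i)
  have hv : v ≡ u [MOD p * m] := ModEq.prod fun _ _ => modulus_add_modEq_iff.2 rfl
  have hu : (p ^ (k + 1)).Coprime u :=
    Coprime.pow_left _ <| Coprime.prod_right fun _ hi =>
      hp.coprime_iff_not_dvd.2 (mem_filter.1 hi).2
  have hdvd : p ^ (k + 1) ∣ p * m := by rw [pow_succ']; exact Nat.mul_dvd_mul_left p hk
  refine ModEq.cancel_right_of_coprime hu ?_
  calc (2 * (p * m)).choose (p * m) * u = (2 * m).choose m * v := choose_mul_prod_not_dvd hp.pos m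
    _ ≡ (2 * m).choose m * u [MOD p ^ (k + 1)] := (hv.of_dvd hdvd).mul_left _

end Nat

theorem PadicInt.dist_natCast_le_of_modEq {p : ℕ} [Fact p.Prime] {a b n : ℕ}
    (h : a ≡ b [MOD p ^ n]) : dist (a : ℤ_[p]) b ≤ (p : ℝ) ^ (-n : ℤ) := by
  rw [dist_comm, dist_eq_norm, ← Int.cast_natCast, ← Int.cast_natCast (R := ℤ_[p]) a,
    ← Int.cast_sub, PadicInt.norm_int_le_pow_iff_dvd]
  exact_mod_cast Nat.modEq_iff_dvd.1 h

/-- For any prime `p`, the sequence `C(2p^s, p^s)` converges in `ℤ_p` as `s → ∞`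
(in particular, for `p = 3` the sequence `C(2·3^s, 3^s)` converges in `ℤ₃`). -/
theorem stmt_9 (p : ℕ) [Fact p.Prime] :
    ∃ L : ℤ_[p],
      Tendsto (fun s : ℕ => (Nat.choose (2 * p ^ s) (p ^ s) : ℤ_[p])) atTop (nhds L) := by
  have hp : p.Prime := Fact.out
  have hp_inv : (p : ℝ)⁻¹ < 1 := inv_lt_one_of_one_lt₀ (by exact_mod_cast hp.one_lt)
  refine cauchySeq_tendsto_of_complete <|
    cauchySeq_of_le_geometric (p : ℝ)⁻¹ (p : ℝ)⁻¹ hp_inv fun s => ?_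
  have hcong := Nat.choose_two_mul_prime_mul_modEq hp (dvd_refl (p ^ s))
  rw [← pow_succ'] at hcong
  calc _ ≤ (p : ℝ) ^ (-(s + 1 : ℕ) : ℤ) := PadicInt.dist_natCast_le_of_modEq hcong.symm
    _ = (p : ℝ)⁻¹ * (p : ℝ)⁻¹ ^ s := by
      rw [zpow_neg, zpow_natCast, pow_succ', mul_inv, inv_pow]
end

section
/- For real w with 0 < w and w near 1 (say 1/2 < w < 2, w ≠ 1), ∑_{k≥1} (-(w - w^{-1})²)^{k-1} / (k · C(2k,k)) = log(w²) / (w² - w^{-2}). -/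
/-!
The coefficient `1 / ((k + 1) C(2k + 2, k + 1))` is the Beta integral `∫₀¹ xᵏ (1 - x)ᵏ⁺¹ dx`.
Since `x (1 - x) ≤ 1/4`, for `|t| < 4` the geometric series may be summed under the integral,
so `∑ tᵏ / ((k + 1) C(2k + 2, k + 1)) = ∫₀¹ (1 - x) / (1 - t x (1 - x)) dx`.
For `t = -(w - w⁻¹)²` the denominator factors as `(1 + (w² - 1) x) (1 + (w⁻² - 1) x)`,
and partial fractions evaluate the integral as `log (w²) / (w² - w⁻²)`.
-/

open Real Set intervalIntegral
open scoped Nat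

theorem integral_pow_mul_one_sub_pow_succ (m n : ℕ) :
    ∫ x in (0:ℝ)..1, x ^ m * (1 - x) ^ (n + 1) =
      (n + 1) / (m + 1) * ∫ x in (0:ℝ)..1, x ^ (m + 1) * (1 - x) ^ n := by
  have hm : (m + 1 : ℝ) ≠ 0 := by positivity
  have hu (x : ℝ) : HasDerivAt (fun x : ℝ => (1 - x) ^ (n + 1)) (-(n + 1) * (1 - x) ^ n) x :=
    (((hasDerivAt_id' x).const_sub 1).fun_pow (n + 1)).congr_deriv (by push_cast; ring)
  have hv (x : ℝ) : HasDerivAt (fun x : ℝ => x ^ (m + 1) / (m + 1)) (x ^ m) x :=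
    ((hasDerivAt_pow (m + 1) x).div_const (m + 1 : ℝ)).congr_deriv (by push_cast; field_simp)
  have parts := integral_mul_deriv_eq_deriv_mul (a := 0) (b := 1) (fun x _ => hu x)
    (fun x _ => hv x) (Continuous.intervalIntegrable (by fun_prop) _ _)
    (Continuous.intervalIntegrable (by fun_prop) _ _)
  simp only [sub_self, ne_eq, add_eq_zero, one_ne_zero, and_false, not_false_eq_true, zero_pow,
    zero_mul, zero_div, mul_zero, sub_zero, zero_sub, ← integral_neg] at parts
  rw [← integral_const_mul]
  convert parts using 1
  · congr 1; ext x; ring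
  · congr 1; ext x; field_simp

theorem integral_pow_mul_one_sub_pow (m n : ℕ) :
    ∫ x in (0:ℝ)..1, x ^ m * (1 - x) ^ n = (m ! * n ! : ℝ) / (m + n + 1)! := by
  induction n generalizing m with
  | zero => simp [Nat.factorial_succ]; field_simp
  | succ n ih =>
    rw [integral_pow_mul_one_sub_pow_succ, ih, show m + 1 + n + 1 = m + (n + 1) + 1 by omega]
    simp only [Nat.factorial_succ]
    push_cast
    field_simp

theorem integral_pow_mul_one_sub_pow_succ_eq_one_div_choose (k : ℕ) :
    ∫ x in (0:ℝ)..1, x ^ k * (1 - x) ^ (k + 1) =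
      1 / ((k + 1 : ℝ) * (Nat.choose (2 * (k + 1)) (k + 1))) := by
  have h := Nat.add_choose_mul_factorial_mul_factorial (k + 1) (k + 1)
  rw [show k + 1 + (k + 1) = 2 * (k + 1) by ring, Nat.factorial_succ k] at h
  rw [integral_pow_mul_one_sub_pow, show k + (k + 1) + 1 = 2 * (k + 1) by ring, ← h]
  push_cast [Nat.factorial_succ]
  field_simp

theorem hasSum_pow_div_succ_mul_choose {t : ℝ} (ht : |t| < 4) :
    HasSum (fun k : ℕ => t ^ k / ((k + 1 : ℝ) * (Nat.choose (2 * (k + 1)) (k + 1))))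
      (∫ x in (0:ℝ)..1, (1 - x) / (1 - t * (x * (1 - x)))) := by
  have hterm (k : ℕ) : t ^ k / ((k + 1 : ℝ) * (Nat.choose (2 * (k + 1)) (k + 1))) =
      ∫ x in (0:ℝ)..1, (1 - x) * (t * (x * (1 - x))) ^ k := by
    rw [div_eq_mul_one_div, ← integral_pow_mul_one_sub_pow_succ_eq_one_div_choose,
      ← integral_const_mul]
    congr 1; ext x; rw [mul_pow, mul_pow]; ring
  have hratio {x : ℝ} (hx : x ∈ Ioc (0:ℝ) 1) : |t * (x * (1 - x))| ≤ |t| / 4 := by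
    rw [abs_mul, abs_of_nonneg (mul_nonneg hx.1.le (sub_nonneg.2 hx.2))]
    nlinarith [sq_nonneg (x - 1 / 2), abs_nonneg t]
  simp_rw [hterm]
  refine hasSum_integral_of_dominated_convergence (fun k _ => (|t| / 4) ^ k)
    (fun k => by fun_prop) (fun k => .of_forall fun x hx => ?_)
    (.of_forall fun _ _ => summable_geometric_of_lt_one (by positivity) (by linarith))
    intervalIntegrable_const (.of_forall fun x hx => ?_)
  · rw [uIoc_of_le zero_le_one] at hx
    rw [norm_mul, norm_pow, Real.norm_eq_abs, Real.norm_eq_abs, abs_of_nonneg (sub_nonneg.2 hx.2)]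
    calc (1 - x) * |t * (x * (1 - x))| ^ k ≤ 1 * (|t| / 4) ^ k := by
          gcongr
          · linarith [hx.1]
          · exact hratio hx
      _ = (|t| / 4) ^ k := one_mul _
  · rw [uIoc_of_le zero_le_one] at hx
    rw [div_eq_mul_inv]
    exact (hasSum_geometric_of_abs_lt_one ((hratio hx).trans_lt (by linarith))).mul_left (1 - x)

theorem one_add_sub_one_mul_pos {a x : ℝ} (ha : 0 < a) (hx : x ∈ Icc (0:ℝ) 1) :
    0 < 1 + (a - 1) * x := by
  obtain ⟨h0, h1⟩ := hx
  rcases le_total a 1 with h | h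
  · nlinarith [mul_nonneg (sub_nonneg.2 h) (sub_nonneg.2 h1)]
  · nlinarith [mul_nonneg (sub_nonneg.2 h) h0]

theorem integral_one_sub_div_eq_log_div (a : ℝ) (ha : 0 < a) (ha1 : a ≠ 1) :
    ∫ x in (0:ℝ)..1, (1 - x) / ((1 + (a - 1) * x) * (1 + (a⁻¹ - 1) * x)) =
      log a / (a - a⁻¹) := by
  have hsub : a - 1 ≠ 0 := sub_ne_zero.2 ha1
  have hadd : a + 1 ≠ 0 := by positivity
  let F : ℝ → ℝ := fun x =>
    (a ^ 2 * log (1 + (a - 1) * x) + a * log (1 + (a⁻¹ - 1) * x)) / ((a - 1) ^ 2 * (a + 1))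
  have hF : ∀ x ∈ uIcc (0:ℝ) 1, HasDerivAt F
      ((1 - x) / ((1 + (a - 1) * x) * (1 + (a⁻¹ - 1) * x))) x := by
    intro x hx
    rw [uIcc_of_le zero_le_one] at hx
    have hP := one_add_sub_one_mul_pos ha hx
    have hQ := one_add_sub_one_mul_pos (inv_pos.2 ha) hx
    have hlin (c : ℝ) : HasDerivAt (fun x : ℝ => 1 + c * x) c x := by
      simpa using ((hasDerivAt_id x).const_mul c).const_add 1
    refine (((((hlin _).log hP.ne').const_mul (a ^ 2)).add
      (((hlin _).log hQ.ne').const_mul a)).div_const ((a - 1) ^ 2 * (a + 1))).congr_deriv ?_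
    -- the denominator left by `field_simp` once it clears `a⁻¹` from the second factor
    have hQa : 0 < a + x * (1 - a) := by
      have := one_add_sub_one_mul_pos ha (x := 1 - x) ⟨by linarith [hx.2], by linarith [hx.1]⟩
      linarith
    field_simp
    ring
  rw [integral_eq_sub_of_hasDerivAt hF]
  · simp only [F, mul_zero, add_zero, log_one, mul_one, zero_div, sub_zero]
    rw [add_sub_cancel, add_sub_cancel, log_inv]
    have hsq : a ^ 2 - 1 ≠ 0 := by
      rw [show a ^ 2 - 1 = (a - 1) * (a + 1) by ring]
      exact mul_ne_zero hsub hadd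
    field_simp
    ring
  · refine ContinuousOn.intervalIntegrable
      (ContinuousOn.div (by fun_prop) (by fun_prop) fun x hx => ?_)
    rw [uIcc_of_le zero_le_one] at hx
    exact (mul_pos (one_add_sub_one_mul_pos ha hx) (one_add_sub_one_mul_pos (inv_pos.2 ha) hx)).ne'

/-- For real `w` with `1/2 < w < 2` and `w ≠ 1`,
`∑_{k≥1} (-(w - w⁻¹)²)^{k-1}/(k · C(2k,k)) = log(w²)/(w² - w⁻²)`. -/
theorem stmt_13 (w : ℝ) (hw₁ : 1 / 2 < w) (hw₂ : w < 2) (hw : w ≠ 1) :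
    ∑' k : ℕ, (-(w - w⁻¹) ^ 2) ^ k /
        ((k + 1 : ℝ) * (Nat.choose (2 * (k + 1)) (k + 1) : ℝ)) =
      Real.log (w ^ 2) / (w ^ 2 - w⁻¹ ^ 2) := by
  have hw0 : 0 < w := by linarith
  have hratio : |-(w - w⁻¹) ^ 2| < 4 := by
    have h₁ : w⁻¹ < 2 := (inv_lt_comm₀ hw0 two_pos).2 (by linarith)
    have h₂ : 2⁻¹ < w⁻¹ := inv_strictAnti₀ hw0 hw₂
    rw [abs_neg, abs_sq]
    nlinarith
  have hw2 : w ^ 2 ≠ 1 := by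
    rwa [Ne, pow_eq_one_iff_of_nonneg hw0.le two_ne_zero]
  rw [(hasSum_pow_div_succ_mul_choose hratio).tsum_eq, inv_pow,
    ← integral_one_sub_div_eq_log_div (w ^ 2) (by positivity) hw2]
  congr 1; ext x; congr 1
  field_simp
  ring
end

section
/- For |x| ≤ 1, ∑_{k≥1} (2x)^{2k} / (k² C(2k,k)) = 2 (arcsin x)². Equivalently, ∑_{k≥1} t^k/(k² C(2k,k)) = 2 arcsin(√t / 2)² for 0 ≤ t ≤ 4. -/
/-!
With `c k = coeff k = 4 ^ k / ((2k + 1) C(2k, k))`, the recursion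
`(2k + 3) c (k+1) = (2k + 2) c k` says exactly that the odd series `T x = ∑ c k x ^ (2k+1)`
solves `(1 - x²) T' = 1 + x T`. Hence `√(1 - x²) T` and `arcsin` have the same derivative on
`(-1, 1)` and agree at `0`, so `T = arcsin x / √(1 - x²)`. The series of the theorem is
`S x = ∑ 2 c k / (k+1) x ^ (2k+2)`, whose derivative is `4 T = (2 arcsin²)'`; so `S = 2 arcsin²`
on `(-1, 1)`. Finally `(k + 1) c k ² ≤ 1` makes the coefficients of `S` `O(k ^ (-3/2))`, so `S`
is continuous on `[-1, 1]` and the identity extends to the endpoints.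
-/

open Real Set Function

theorem summable_natCast_mul_pow_sub_one {r : ℝ} (hr : |r| < 1) :
    Summable fun n : ℕ => (n : ℝ) * r ^ (n - 1) := by
  have hr' : ‖r‖ < 1 := by rwa [Real.norm_eq_abs]
  refine (summable_nat_add_iff 1).mp ?_
  refine ((summable_pow_mul_geometric_of_norm_lt_one 1 hr').add
    (summable_geometric_of_norm_lt_one hr')).congr fun n => ?_
  simp only [Nat.add_sub_cancel, pow_one, Nat.cast_add, Nat.cast_one]
  ring

theorem injective_two_mul_add (j : ℕ) : Injective fun k : ℕ => 2 * k + j :=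
  fun _ _ h => by simpa using h

section BoundedCoefficients

variable {a : ℕ → ℝ} {C : ℝ} {e : ℕ → ℕ}

theorem summable_mul_pow (he : Injective e) (ha : ∀ k, |a k| ≤ C) {x : ℝ} (hx : |x| < 1) :
    Summable fun k => a k * x ^ e k := by
  have hgeom := summable_geometric_of_abs_lt_one (r := |x|) (by rwa [abs_abs])
  refine .of_norm_bounded ((hgeom.comp_injective he).mul_left C) fun k => ?_
  rw [norm_mul, norm_pow, Real.norm_eq_abs, Real.norm_eq_abs]
  exact mul_le_mul_of_nonneg_right (ha k) (by positivity)

theorem norm_mul_natCast_mul_pow_sub_one_le (ha : ∀ k, |a k| ≤ C) {x r : ℝ} (hxr : |x| ≤ r)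
    (k : ℕ) :
    ‖a k * (e k * x ^ (e k - 1))‖ ≤ C * (e k * r ^ (e k - 1)) := by
  rw [norm_mul, norm_mul, norm_pow, Real.norm_eq_abs, Real.norm_eq_abs, Real.norm_eq_abs,
    Nat.abs_cast]
  gcongr
  · exact (abs_nonneg _).trans (ha 0)
  · exact ha k

theorem summable_mul_natCast_mul_pow_sub_one (he : Injective e) (ha : ∀ k, |a k| ≤ C) {x : ℝ}
    (hx : |x| < 1) : Summable fun k => a k * (e k * x ^ (e k - 1)) :=
  have hgeom := summable_natCast_mul_pow_sub_one (r := |x|) (by rwa [abs_abs])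
  .of_norm_bounded ((hgeom.comp_injective he).mul_left C)
    (norm_mul_natCast_mul_pow_sub_one_le ha le_rfl)

theorem hasDerivAt_tsum_mul_pow (he : Injective e) (ha : ∀ k, |a k| ≤ C) {x : ℝ}
    (hx : |x| < 1) :
    HasDerivAt (fun y => ∑' k, a k * y ^ e k) (∑' k, a k * (e k * x ^ (e k - 1))) x := by
  obtain ⟨r, hxr, hr⟩ := exists_between hx
  have hr' : |r| < 1 := by rwa [abs_of_pos ((abs_nonneg x).trans_lt hxr)]
  refine hasDerivAt_tsum_of_isPreconnected
    (((summable_natCast_mul_pow_sub_one hr').comp_injective he).mul_left C) isOpen_Ioo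
    isPreconnected_Ioo (fun k y _ => (hasDerivAt_pow (e k) y).const_mul (a k))
    (fun k y hy => norm_mul_natCast_mul_pow_sub_one_le ha (abs_lt.mpr hy).le k)
    (abs_lt.mp hxr) (summable_mul_pow he ha hx) (abs_lt.mp hxr)

end BoundedCoefficients

theorem eqOn_of_hasDerivAt_eq {f g f' : ℝ → ℝ} {s : Set ℝ} (hs : IsOpen s)
    (hs' : IsPreconnected s)
    (hf : ∀ y ∈ s, HasDerivAt f (f' y) y) (hg : ∀ y ∈ s, HasDerivAt g (f' y) y)
    {x₀ : ℝ} (hx₀ : x₀ ∈ s) (h : f x₀ = g x₀) : EqOn f g s :=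
  hs.eqOn_of_deriv_eq hs' (fun y hy => (hf y hy).differentiableAt.differentiableWithinAt)
    (fun y hy => (hg y hy).differentiableAt.differentiableWithinAt)
    (fun y hy => (hf y hy).deriv.trans (hg y hy).deriv.symm) hx₀ h

namespace ArcsinSq

noncomputable def coeff (k : ℕ) : ℝ := 4 ^ k / ((2 * k + 1) * k.centralBinom)

theorem cast_centralBinom_succ (k : ℕ) :
    ((k + 1).centralBinom : ℝ) = 2 * (2 * k + 1) * k.centralBinom / (k + 1) := by
  rw [eq_div_iff (by positivity)]
  exact_mod_cast (mul_comm _ _).trans (Nat.succ_mul_centralBinom_succ k)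

theorem coeff_zero : coeff 0 = 1 := by simp [coeff]

theorem coeff_succ (k : ℕ) : (2 * k + 3) * coeff (k + 1) = (2 * k + 2) * coeff k := by
  rw [coeff, coeff, cast_centralBinom_succ]
  push_cast
  field_simp
  ring

theorem succ_mul_coeff_sq_le_one (k : ℕ) : ((k : ℝ) + 1) * coeff k ^ 2 ≤ 1 := by
  induction k with
  | zero => simp [coeff_zero]
  | succ k ih =>
    have h := coeff_succ k
    push_cast
    refine le_of_mul_le_mul_left ?_ (by positivity : (0 : ℝ) < (2 * k + 3) ^ 2)
    calc (2 * (k : ℝ) + 3) ^ 2 * ((k + 1 + 1) * coeff (k + 1) ^ 2)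
        = 4 * ((k : ℝ) + 1) * (k + 2) * ((k + 1) * coeff k ^ 2) := by
          linear_combination (k + 2) * ((2 * k + 3) * coeff (k + 1) + (2 * k + 2) * coeff k) * h
      _ ≤ 4 * ((k : ℝ) + 1) * (k + 2) * 1 := by gcongr
      _ ≤ (2 * k + 3) ^ 2 * 1 := by nlinarith

theorem abs_coeff_le_rpow (k : ℕ) : |coeff k| ≤ ((k : ℝ) + 1) ^ (-(1 / 2 : ℝ)) := by
  have hn : (0 : ℝ) < k + 1 := by positivity
  rw [rpow_neg hn.le, ← sqrt_eq_rpow, ← one_div, le_div_iff₀ (sqrt_pos.mpr hn),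
    ← pow_le_one_iff_of_nonneg (by positivity) two_ne_zero, mul_pow, sq_abs, sq_sqrt hn.le,
    mul_comm]
  exact succ_mul_coeff_sq_le_one k

theorem abs_coeff_le_one (k : ℕ) : |coeff k| ≤ 1 :=
  (abs_coeff_le_rpow k).trans (rpow_le_one_of_one_le_of_nonpos (by simp) (by norm_num))

noncomputable def oddSeries (x : ℝ) : ℝ := ∑' k, coeff k * x ^ (2 * k + 1)

noncomputable def evenSeries (x : ℝ) : ℝ := ∑' k, 2 * coeff k / (k + 1) * x ^ (2 * k + 2)

theorem hasDerivAt_oddSeries {x : ℝ} (hx : |x| < 1) :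
    HasDerivAt oddSeries (∑' k, coeff k * ((2 * k + 1 : ℕ) * x ^ (2 * k))) x :=
  hasDerivAt_tsum_mul_pow (injective_two_mul_add 1) abs_coeff_le_one hx

theorem one_sub_sq_mul_deriv_oddSeries {x : ℝ} (hx : |x| < 1) :
    (1 - x ^ 2) * ∑' k, coeff k * ((2 * k + 1 : ℕ) * x ^ (2 * k)) = 1 + x * oddSeries x := by
  set d : ℕ → ℝ := fun k => coeff k * ((2 * k + 1 : ℕ) * x ^ (2 * k))
  have hd : HasSum d (∑' k, d k) :=
    (summable_mul_natCast_mul_pow_sub_one (injective_two_mul_add 1) abs_coeff_le_one hx).hasSum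
  have hshift : HasSum (fun k => d (k + 1)) (∑' k, d k - 1) := by
    have h0 : d 0 = 1 := by simp [d, coeff_zero]
    simpa [h0] using (hasSum_nat_add_iff' 1).mpr hd
  have hodd : HasSum (fun k => x * (coeff k * x ^ (2 * k + 1))) (x * oddSeries x) :=
    (summable_mul_pow (injective_two_mul_add 1) abs_coeff_le_one hx).hasSum.mul_left x
  have hrec : (fun k => d (k + 1) - x ^ 2 * d k) = fun k => x * (coeff k * x ^ (2 * k + 1)) := by
    funext k
    simp only [d]
    push_cast
    linear_combination x ^ (2 * k + 2) * coeff_succ k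
  have := (hshift.sub (hd.mul_left (x ^ 2))).unique (hrec ▸ hodd)
  linear_combination this

theorem sqrt_one_sub_sq_mul_oddSeries :
    EqOn (fun y => √(1 - y ^ 2) * oddSeries y) arcsin (Ioo (-1) 1) := by
  refine eqOn_of_hasDerivAt_eq isOpen_Ioo isPreconnected_Ioo (f' := fun y => 1 / √(1 - y ^ 2))
    (fun y hy => ?_) (fun y hy => hasDerivAt_arcsin hy.1.ne' hy.2.ne)
    (x₀ := 0) ⟨by norm_num, by norm_num⟩ (by simp [oddSeries])
  have hy2 : 0 < 1 - y ^ 2 := by nlinarith [hy.1, hy.2]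
  have hode := one_sub_sq_mul_deriv_oddSeries (abs_lt.mpr hy)
  refine ((((hasDerivAt_pow 2 y).const_sub 1).sqrt hy2.ne').mul
    (hasDerivAt_oddSeries (abs_lt.mpr hy))).congr_deriv ?_
  set D := ∑' k, coeff k * ((2 * k + 1 : ℕ) * y ^ (2 * k))
  rw [← sq_sqrt hy2.le] at hode
  field_simp
  linear_combination 2 * hode

theorem abs_two_mul_coeff_div_le (k : ℕ) :
    |2 * coeff k / (k + 1)| ≤ 2 * ((k : ℝ) + 1) ^ (-(3 / 2) : ℝ) := by
  have hn : (0 : ℝ) < k + 1 := by positivity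
  rw [abs_div, abs_mul, abs_two, abs_of_pos hn, show (-(3 / 2) : ℝ) = -(1 / 2) + -1 by norm_num,
    rpow_add hn, rpow_neg_one, mul_div_assoc, ← div_eq_mul_inv]
  gcongr
  exact abs_coeff_le_rpow k

theorem abs_two_mul_coeff_div_le_two (k : ℕ) : |2 * coeff k / (k + 1)| ≤ 2 :=
  (abs_two_mul_coeff_div_le k).trans <| mul_le_of_le_one_right zero_le_two <|
    rpow_le_one_of_one_le_of_nonpos (by simp) (by norm_num)

theorem hasDerivAt_evenSeries {x : ℝ} (hx : |x| < 1) :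
    HasDerivAt evenSeries (4 * oddSeries x) x := by
  refine (hasDerivAt_tsum_mul_pow (injective_two_mul_add 2) abs_two_mul_coeff_div_le_two
    hx).congr_deriv ?_
  rw [oddSeries, ← tsum_mul_left]
  refine tsum_congr fun k => ?_
  push_cast
  field_simp
  ring

theorem evenSeries_eqOn_Ioo : EqOn evenSeries (fun y => 2 * arcsin y ^ 2) (Ioo (-1) 1) := by
  refine eqOn_of_hasDerivAt_eq isOpen_Ioo isPreconnected_Ioo (f' := fun y => 4 * oddSeries y)
    (fun y hy => hasDerivAt_evenSeries (abs_lt.mpr hy)) (fun y hy => ?_)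
    (x₀ := 0) ⟨by norm_num, by norm_num⟩ (by simp [evenSeries])
  have hs : 0 < √(1 - y ^ 2) := sqrt_pos.mpr (by nlinarith [hy.1, hy.2])
  refine (((hasDerivAt_arcsin hy.1.ne' hy.2.ne).pow 2).const_mul 2).congr_deriv ?_
  rw [← sqrt_one_sub_sq_mul_oddSeries hy]
  field_simp
  ring

theorem continuousOn_evenSeries : ContinuousOn evenSeries (Icc (-1) 1) := by
  have hsum : Summable fun k : ℕ => 2 * ((k : ℝ) + 1) ^ (-(3 / 2) : ℝ) := by
    have hp := summable_nat_rpow (p := -(3 / 2)).mpr (by norm_num)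
    simpa using ((summable_nat_add_iff 1).mpr hp).mul_left 2
  refine continuousOn_tsum (fun k => (continuous_const.mul (continuous_pow _)).continuousOn) hsum
    fun k y hy => ?_
  rw [norm_mul, norm_pow, Real.norm_eq_abs, Real.norm_eq_abs]
  exact (mul_le_of_le_one_right (abs_nonneg _) (pow_le_one₀ (abs_nonneg y) (abs_le.mpr hy))).trans
    (abs_two_mul_coeff_div_le k)

theorem evenSeries_eqOn_Icc : EqOn evenSeries (fun y => 2 * arcsin y ^ 2) (Icc (-1) 1) :=
  evenSeries_eqOn_Ioo.of_subset_closure continuousOn_evenSeries (by fun_prop) Ioo_subset_Icc_self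
    (by rw [closure_Ioo (by norm_num)])

theorem two_mul_pow_div_sq_mul_choose (k : ℕ) (x : ℝ) :
    (2 * x) ^ (2 * (k + 1)) / ((k + 1 : ℝ) ^ 2 * (Nat.choose (2 * (k + 1)) (k + 1) : ℝ))
      = 2 * coeff k / (k + 1) * x ^ (2 * k + 2) := by
  rw [← Nat.centralBinom_eq_two_mul_choose, cast_centralBinom_succ, coeff, mul_pow,
    pow_mul (2 : ℝ)]
  field_simp
  ring

end ArcsinSq

/-- For `|x| ≤ 1`, `∑_{k≥1} (2x)^{2k}/(k² C(2k,k)) = 2 (arcsin x)²`. -/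
theorem stmt_14 (x : ℝ) (hx : |x| ≤ 1) :
    ∑' k : ℕ, (2 * x) ^ (2 * (k + 1)) /
        (((k + 1 : ℝ)) ^ 2 * (Nat.choose (2 * (k + 1)) (k + 1) : ℝ)) =
      2 * Real.arcsin x ^ 2 := by
  exact (tsum_congr fun k => ArcsinSq.two_mul_pow_div_sq_mul_choose k x).trans
    (ArcsinSq.evenSeries_eqOn_Icc (abs_le.mp hx))
end
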